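/- arXiv:1912.05768 — 3 statements merged into one kernel-verified Lean document; each statement's English description precedes it below -/
import Mathlib

section
/- Every integer triple (x, b, c) with x² - 1 = b·c in which exactly two of x, b, c are odd lies in the orbit of the triple (0, 1, -1) under the group generated by N: (x, b, c) ↦ (x, c, b), T: (x, b, c) ↦ (x + b, b, b + 2x + c), and T⁻¹: (x, b, c) ↦ (x - b, b, b - 2x + c). -/
/-- Exactly two of the three given integers are odd. -/
def exactlyTwoOdd (x b c : ℤ) : Prop :=
  (Odd x ∧ Odd b ∧ Even c) ∨ (Odd x ∧ Even b ∧ Odd c) ∨ (Even x ∧ Odd b ∧ Odd c)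

/-- One step of the maps N, T, T⁻¹ on integer triples. -/
def dedekindStep (t t' : ℤ × ℤ × ℤ) : Prop :=
  t' = (t.1, t.2.2, t.2.1) ∨
  t' = (t.1 + t.2.1, t.2.1, t.2.1 + 2 * t.1 + t.2.2) ∨
  t' = (t.1 - t.2.1, t.2.1, t.2.1 - 2 * t.1 + t.2.2)

/-!
Each of `N`, `T`, `T⁻¹` is undone by another one of them, and all three preserve both
`x² - 1 = b c` and the parity pattern, so it suffices to move every such triple to `(0, 1, -1)`.
If `|x| ≥ 2`, then `|b| |c| = x² - 1 < x²`, so after possibly applying `N` we have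
`0 < |b| < |x|`, and one of `T`, `T⁻¹` decreases `|x|`. If `x = ±1`, then `b c = 0`; after
possibly applying `N`, `b = 0` and the parity condition forces `c` to be odd, so a power of `T`
moves `c` to `1`, from where `(0, 1, -1)` is two steps away. If `x = 0`, then `b c = -1`.
-/

open Relation

lemma dedekindStep_swap (x b c : ℤ) : dedekindStep (x, b, c) (x, c, b) := Or.inl rfl

lemma dedekindStep_translate (x b c : ℤ) :
    dedekindStep (x, b, c) (x + b, b, b + 2 * x + c) :=
  Or.inr (Or.inl rfl)

lemma dedekindStep_translate_inv (x b c : ℤ) :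
    dedekindStep (x, b, c) (x - b, b, b - 2 * x + c) :=
  Or.inr (Or.inr rfl)

instance : Std.Symm dedekindStep where
  symm := by
    rintro ⟨x, b, c⟩ t (rfl | rfl | rfl)
    · exact dedekindStep_swap x c b
    · convert dedekindStep_translate_inv (x + b) b (b + 2 * x + c) using 3 <;> ring
    · convert dedekindStep_translate (x - b) b (b - 2 * x + c) using 3 <;> ring

lemma reflTransGen_translate_zpow (x b c k : ℤ) :
    ReflTransGen dedekindStep (x, b, c) (x + k * b, b, c + 2 * k * x + k ^ 2 * b) := by
  induction k using Int.induction_on with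
  | zero => simpa using ReflTransGen.refl
  | succ k ih =>
    refine ih.tail ?_
    convert dedekindStep_translate _ _ _ using 2
    · ring
    · congr 1; ring
  | pred k ih =>
    refine ih.tail ?_
    convert dedekindStep_translate_inv _ _ _ using 2
    · ring
    · congr 1; ring

namespace exactlyTwoOdd

variable {x b c : ℤ}

lemma swap (h : exactlyTwoOdd x b c) : exactlyTwoOdd x c b := by
  unfold exactlyTwoOdd at *
  tauto

lemma translate (h : exactlyTwoOdd x b c) : exactlyTwoOdd (x + b) b (b + 2 * x + c) := by
  simp only [exactlyTwoOdd, Int.odd_iff, Int.even_iff] at *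
  omega

lemma translate_inv (h : exactlyTwoOdd x b c) : exactlyTwoOdd (x - b) b (b - 2 * x + c) := by
  simp only [exactlyTwoOdd, Int.odd_iff, Int.even_iff] at *
  omega

lemma odd_of_zero (h : exactlyTwoOdd x 0 c) : Odd c := by
  simp only [exactlyTwoOdd, Int.odd_iff, Int.even_iff] at h
  exact Int.odd_iff.mpr (by omega)

end exactlyTwoOdd

lemma reflTransGen_zero_one_neg_one_of_mul_eq_neg_one {b c : ℤ} (h : b * c = -1) :
    ReflTransGen dedekindStep (0, b, c) (0, 1, -1) := by
  rcases Int.eq_one_or_neg_one_of_mul_eq_neg_one' h with ⟨rfl, rfl⟩ | ⟨rfl, rfl⟩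
  · exact .refl
  · exact .single (dedekindStep_swap 0 (-1) 1)

lemma reflTransGen_zero_one_neg_one_of_sq_eq_one {x c : ℤ} (hx : x ^ 2 = 1) (hc : Odd c) :
    ReflTransGen dedekindStep (x, 0, c) (0, 1, -1) := by
  obtain ⟨m, rfl⟩ := hc
  have to_one : ReflTransGen dedekindStep (x, 0, 2 * m + 1) (x, 0, 1) := by
    convert reflTransGen_translate_zpow x 0 (2 * m + 1) (-m * x) using 3
    · ring
    · linear_combination 2 * m * hx
  have to_base : ReflTransGen dedekindStep (x, 1, 0) (0, 1, -1) := by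
    convert reflTransGen_translate_zpow x 1 0 (-x) using 3
    · ring
    · linear_combination hx
  exact to_one.trans (to_base.head (dedekindStep_swap x 0 1))

lemma sq_lt_sq_of_sq_sub_one_eq_mul {x b c : ℤ} (hx : x ≠ 0) (h : x ^ 2 - 1 = b * c)
    (hbc : b ^ 2 ≤ c ^ 2) : b ^ 2 < x ^ 2 := by
  have hx2 : 0 < x ^ 2 := by positivity
  have hprod : (b * c) ^ 2 < (x ^ 2) ^ 2 := by
    rw [← h]
    nlinarith
  nlinarith [mul_le_mul_of_nonneg_left hbc (sq_nonneg b)]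

lemma exists_dedekindStep_natAbs_lt {x b c : ℤ} (hb : b ≠ 0) (hbx : b.natAbs < x.natAbs)
    (h : x ^ 2 - 1 = b * c) (hp : exactlyTwoOdd x b c) :
    ∃ x' c' : ℤ, dedekindStep (x, b, c) (x', b, c') ∧
      x' ^ 2 - 1 = b * c' ∧ exactlyTwoOdd x' b c' ∧ x'.natAbs < x.natAbs := by
  obtain hlt | hlt : (x + b).natAbs < x.natAbs ∨ (x - b).natAbs < x.natAbs := by omega
  · exact ⟨_, _, dedekindStep_translate x b c, by linear_combination h, hp.translate, hlt⟩
  · exact ⟨_, _, dedekindStep_translate_inv x b c, by linear_combination h, hp.translate_inv,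
      hlt⟩

lemma exists_reflTransGen_natAbs_lt {x b c : ℤ} (hx : 2 ≤ x.natAbs) (h : x ^ 2 - 1 = b * c)
    (hp : exactlyTwoOdd x b c) :
    ∃ x' b' c' : ℤ, ReflTransGen dedekindStep (x, b, c) (x', b', c') ∧
      x' ^ 2 - 1 = b' * c' ∧ exactlyTwoOdd x' b' c' ∧ x'.natAbs < x.natAbs := by
  have hx4 : (2 : ℤ) ^ 2 ≤ x ^ 2 := Int.natAbs_le_iff_sq_le.mp hx
  have hx0 : x ≠ 0 := by rintro rfl; simp at hx
  wlog hbc : b ^ 2 ≤ c ^ 2 generalizing b c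
  · obtain ⟨x', b', c', hsteps, h', hp', hlt⟩ :=
      this (h.trans (mul_comm b c)) hp.swap (le_of_not_ge hbc : c ^ 2 ≤ b ^ 2)
    exact ⟨x', b', c', hsteps.head (dedekindStep_swap x b c), h', hp', hlt⟩
  have hb : b ≠ 0 := by rintro rfl; linarith
  obtain ⟨x', c', hstep, h', hp', hlt⟩ := exists_dedekindStep_natAbs_lt hb
    (Int.natAbs_lt_iff_sq_lt.mpr (sq_lt_sq_of_sq_sub_one_eq_mul hx0 h hbc)) h hp
  exact ⟨x', b, c', .single hstep, h', hp', hlt⟩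

theorem reflTransGen_zero_one_neg_one {x b c : ℤ} (h : x ^ 2 - 1 = b * c)
    (hp : exactlyTwoOdd x b c) :
    ReflTransGen dedekindStep (x, b, c) (0, 1, -1) := by
  obtain hx | hx | hx : x.natAbs = 0 ∨ x.natAbs = 1 ∨ 2 ≤ x.natAbs := by omega
  · obtain rfl : x = 0 := Int.natAbs_eq_zero.mp hx
    exact reflTransGen_zero_one_neg_one_of_mul_eq_neg_one (by linarith)
  · have hx1 : x ^ 2 = 1 := by rw [← Int.natAbs_pow_two, hx]; rfl
    rcases mul_eq_zero.mp (show b * c = 0 by linarith) with rfl | rfl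
    · exact reflTransGen_zero_one_neg_one_of_sq_eq_one hx1 hp.odd_of_zero
    · exact (reflTransGen_zero_one_neg_one_of_sq_eq_one hx1 hp.swap.odd_of_zero).head
        (dedekindStep_swap x b 0)
  · obtain ⟨x', b', c', hstep, h', hp', hlt⟩ := exists_reflTransGen_natAbs_lt hx h hp
    exact hstep.trans (reflTransGen_zero_one_neg_one h' hp')
termination_by x.natAbs

theorem stmt_6 (x b c : ℤ) (h : x ^ 2 - 1 = b * c) (hp : exactlyTwoOdd x b c) :
    Relation.ReflTransGen dedekindStep (0, 1, -1) (x, b, c) :=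
  symm_of (ReflTransGen dedekindStep) (reflTransGen_zero_one_neg_one h hp)
end

section
/- If the triple (x, b, c) with x² - 1 = b·c lies in the orbit of (0, 1, -1) under the maps N: (x,b,c) ↦ (x,c,b) and T: (x,b,c) ↦ (x+b, b, b+2x+c), then exactly two of x, b, c are odd. -/
/-- One step of the maps N and T on integer triples. -/
def dedekindStepNT (t t' : ℤ × ℤ × ℤ) : Prop :=
  t' = (t.1, t.2.2, t.2.1) ∨
  t' = (t.1 + t.2.1, t.2.1, t.2.1 + 2 * t.1 + t.2.2)

theorem stmt_7 (x b c : ℤ) (h : x ^ 2 - 1 = b * c)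
    (horb : Relation.ReflTransGen dedekindStepNT (0, 1, -1) (x, b, c)) :
    exactlyTwoOdd x b c := by
  suffices H : ∀ t : ℤ × ℤ × ℤ, Relation.ReflTransGen dedekindStepNT (0, 1, -1) t →
      exactlyTwoOdd t.1 t.2.1 t.2.2 from H (x, b, c) horb
  intro t ht
  induction ht with
  | refl =>
    right; right
    exact ⟨Even.zero, odd_one, ⟨-1, by ring⟩⟩
  | tail _ hstep ih =>
    rcases hstep with rfl | rfl <;>
    · simp only [exactlyTwoOdd, Int.even_iff, Int.odd_iff] at ih ⊢
      omega
end

section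
/- If the triple (x, b, c) with x² - 1 = b·c lies in the orbit of (0, 1, -1) under N and T and T⁻¹, and b ≠ 0 is even, then 8 divides b and (x² - 1)/b is odd. -/
lemma dedekind_inv {t : ℤ × ℤ × ℤ}
    (horb : Relation.ReflTransGen dedekindStep (0, 1, -1) t) :
    Odd t.2.1 ∨ Odd t.2.2 := by
  induction horb with
  | refl => left; exact ⟨0, rfl⟩
  | tail _ step ih =>
    rcases step with hs | hs | hs <;> subst hs <;>
      simp only [Int.odd_iff] at ih ⊢ <;> omega

theorem stmt_8 (x b c : ℤ) (h : x ^ 2 - 1 = b * c)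
    (horb : Relation.ReflTransGen dedekindStep (0, 1, -1) (x, b, c))
    (hb0 : b ≠ 0) (hbe : Even b) :
    (8 : ℤ) ∣ b ∧ Odd ((x ^ 2 - 1) / b) := by
  have hc : Odd c := by
    rcases dedekind_inv horb with hb | hc
    · exact absurd hb (Int.not_odd_iff_even.mpr hbe)
    · exact hc
  have hx : Odd x := by
    rcases Int.even_or_odd x with he | ho
    · exfalso
      have h1 : Even (b * c) := hbe.mul_right c
      rw [← h] at h1
      have h2 : Even (x ^ 2) := (Int.even_pow.mpr ⟨he, two_ne_zero⟩)
      rcases h1 with ⟨m, hm⟩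
      rcases h2 with ⟨n, hn⟩
      omega
    · exact ho
  have h8 : (8 : ℤ) ∣ x ^ 2 - 1 := by
    obtain ⟨k, hk⟩ := hx
    obtain ⟨n, hn⟩ := Int.even_mul_succ_self k
    exact ⟨n, by subst hk; linear_combination (4 : ℤ) * hn⟩
  have h8bc : (8 : ℤ) ∣ b * c := h ▸ h8
  have hcop : IsCoprime (8 : ℤ) c := by
    have h2 : IsCoprime (2 : ℤ) c :=
      (Int.prime_two.coprime_iff_not_dvd).mpr (by
        have := Int.odd_iff.mp hc
        omega)
    have h3 : IsCoprime ((2 : ℤ) ^ 3) c := h2.pow_left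
    norm_num at h3
    exact h3
  refine ⟨hcop.dvd_of_dvd_mul_right h8bc, ?_⟩
  rw [h, Int.mul_ediv_cancel_left _ hb0]
  exact hc
end
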